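/- Value-function version of the extended Porteus theorem. Assume: (P(a)) Ṽ is as given (nonempty and closed under pointwise convergence); (P(b)) for every bounded v : S × B → ℝ such that v(·, b) ∈ Ṽ for every b ∈ B, also (Hv)(·, b) ∈ Ṽ for every b ∈ B. Then the unique bounded fixed point v* of H satisfies v*(·, b) ∈ Ṽ for every b ∈ B. -/

import Mathlib

/-!
Starting from a constant function whose values lie in `Vt`, value iteration `v ↦ H v` stays
in the structured class by P(b). Since `H` is a `β`-contraction for the sup distance, the
iterates converge to `v*` at the rate `β ^ n`, in particular pointwise, and `Vt` is closed under
pointwise limits.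
-/

open Finset

/-- The belief simplex over the modulation space `M`. -/
abbrev Belief (M : Type) [Fintype M] : Type :=
  {b : M → ℝ // (∀ μ, 0 ≤ b μ) ∧ ∑ μ, b μ = 1}

/-- A finite SEP-POMDP: feasible action sets, cost function, state transition
probabilities, modulation/observation probabilities, and a discount factor. -/
structure SEP (S Y M A : Type) [Fintype S] [Fintype Y] [Fintype M] [Fintype A] where
  act : S → Finset A
  act_ne : ∀ s, (act s).Nonempty
  c : S → Y → A → ℝ
  p : Y → S → A → S → ℝ
  p_nonneg : ∀ y' s a s', 0 ≤ p y' s a s'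
  p_sum : ∀ y' s a, ∑ s', p y' s a s' = 1
  Q : M → Y → M → ℝ
  Q_nonneg : ∀ μ y' μ', 0 ≤ Q μ y' μ'
  Q_sum : ∀ μ, ∑ y', ∑ μ', Q μ y' μ' = 1
  β : ℝ
  β_nonneg : 0 ≤ β
  β_lt_one : β < 1

namespace SEP

variable {S Y M A : Type} [Fintype S] [Fintype Y] [Fintype M] [Fintype A]

/-- `σ(y' | b) = ∑ μ, ∑ μ', b μ * Q μ y' μ'`. -/
def sig (P : SEP S Y M A) (b : Belief M) (y' : Y) : ℝ :=
  ∑ μ, ∑ μ', b.1 μ * P.Q μ y' μ'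

/-- The Bayesian belief update `λ(y', b)`. -/
noncomputable def lam (P : SEP S Y M A) (y' : Y) (b : Belief M) : Belief M :=
  if h : 0 < P.sig b y' then
    ⟨fun μ' => (∑ μ, b.1 μ * P.Q μ y' μ') / P.sig b y',
      fun μ' => div_nonneg (Finset.sum_nonneg fun μ _ =>
        mul_nonneg (b.2.1 μ) (P.Q_nonneg μ y' μ')) h.le,
      by
        rw [← Finset.sum_div, Finset.sum_comm]
        exact div_self (ne_of_gt h)⟩
  else b

/-- `h_{y'}(s, a, v̄) = c s y' a + β * ∑ s', p y' s a s' * v̄ s'`. -/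
def hy (P : SEP S Y M A) (y' : Y) (s : S) (a : A) (vb : S → ℝ) : ℝ :=
  P.c s y' a + P.β * ∑ s', P.p y' s a s' * vb s'

/-- The Bellman operator `H` of the SEP-POMDP. -/
noncomputable def H (P : SEP S Y M A) (v : S → Belief M → ℝ) (s : S) (b : Belief M) : ℝ :=
  (P.act s).inf' (P.act_ne s) fun a =>
    ∑ y', P.sig b y' * P.hy y' s a fun s' => v s' (P.lam y' b)

/-- Boundedness of a function `v : S × B → ℝ`. -/
def Bdd (v : S → Belief M → ℝ) : Prop :=
  ∃ C, ∀ s b, |v s b| ≤ C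

end SEP

open Filter Topology

lemma abs_sum_mul_le_of_sum_eq_one {ι : Type*} [Fintype ι] {w x : ι → ℝ} {C : ℝ}
    (hw : ∀ i, 0 ≤ w i) (hsum : ∑ i, w i = 1) (hx : ∀ i, |x i| ≤ C) :
    |∑ i, w i * x i| ≤ C :=
  calc |∑ i, w i * x i| ≤ ∑ i, |w i * x i| := abs_sum_le_sum_abs _ _
    _ ≤ ∑ i, w i * C := sum_le_sum fun i _ => by
        rw [abs_mul, abs_of_nonneg (hw i)]
        exact mul_le_mul_of_nonneg_left (hx i) (hw i)
    _ = C := by rw [← sum_mul, hsum, one_mul]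

lemma Finset.abs_inf'_sub_inf'_le {ι : Type*} {s : Finset ι} (hs : s.Nonempty) {f g : ι → ℝ}
    {ε : ℝ} (h : ∀ i ∈ s, |f i - g i| ≤ ε) : |s.inf' hs f - s.inf' hs g| ≤ ε := by
  rw [abs_sub_le_iff]
  constructor
  · rw [sub_le_iff_le_add, ← sub_le_iff_le_add']
    exact le_inf' hs _ fun i hi =>
      (sub_le_sub_right (inf'_le f hi) _).trans (by linarith [(abs_le.mp (h i hi)).2])
  · rw [sub_le_iff_le_add, ← sub_le_iff_le_add']
    exact le_inf' hs _ fun i hi =>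
      (sub_le_sub_right (inf'_le g hi) _).trans (by linarith [(abs_le.mp (h i hi)).1])

section ValueIteration

variable {X Z : Type*} {T : (X → Z → ℝ) → X → Z → ℝ} {β : ℝ}

lemma abs_iterate_sub_le_of_isFixedPt
    (hT : ∀ v w C, (∀ x z, |v x z - w x z| ≤ C) → ∀ x z, |T v x z - T w x z| ≤ β * C)
    {u v : X → Z → ℝ} (hu : Function.IsFixedPt T u) {C : ℝ} (hC : ∀ x z, |v x z - u x z| ≤ C)
    (n : ℕ) : ∀ x z, |T^[n] v x z - u x z| ≤ β ^ n * C := by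
  induction n with
  | zero => simpa using hC
  | succ n ih =>
    intro x z
    rw [Function.iterate_succ_apply', ← hu, pow_succ', mul_assoc]
    exact hT _ _ _ ih x z

lemma tendsto_iterate_of_isFixedPt (hβ₀ : 0 ≤ β) (hβ₁ : β < 1)
    (hT : ∀ v w C, (∀ x z, |v x z - w x z| ≤ C) → ∀ x z, |T v x z - T w x z| ≤ β * C)
    {u v : X → Z → ℝ} (hu : Function.IsFixedPt T u) {C : ℝ} (hC : ∀ x z, |v x z - u x z| ≤ C)
    (z : Z) : Tendsto (fun n x => T^[n] v x z) atTop (𝓝 fun x => u x z) := by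
  rw [tendsto_pi_nhds]
  intro x
  have hgeom : Tendsto (fun n => β ^ n * C) atTop (𝓝 0) := by
    simpa using (tendsto_pow_atTop_nhds_zero_of_lt_one hβ₀ hβ₁).mul_const C
  have hdiff : Tendsto (fun n => T^[n] v x z - u x z) atTop (𝓝 0) :=
    squeeze_zero_norm (fun n => abs_iterate_sub_le_of_isFixedPt hT hu hC n x z) hgeom
  simpa using hdiff.add_const (u x z)

end ValueIteration

namespace SEP

variable {S Y M A : Type} [Fintype S] [Fintype Y] [Fintype M] [Fintype A]

lemma sig_nonneg (P : SEP S Y M A) (b : Belief M) (y' : Y) : 0 ≤ P.sig b y' :=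
  sum_nonneg fun μ _ => sum_nonneg fun μ' _ => mul_nonneg (b.2.1 μ) (P.Q_nonneg μ y' μ')

lemma sum_sig_eq_one (P : SEP S Y M A) (b : Belief M) : ∑ y', P.sig b y' = 1 := by
  simp only [sig]
  rw [sum_comm]
  simp_rw [← mul_sum, P.Q_sum, mul_one]
  exact b.2.2

lemma abs_hy_sub_hy_le (P : SEP S Y M A) (y' : Y) (s : S) (a : A) {v w : S → ℝ} {C : ℝ}
    (h : ∀ s', |v s' - w s'| ≤ C) : |P.hy y' s a v - P.hy y' s a w| ≤ P.β * C := by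
  have hdiff : P.hy y' s a v - P.hy y' s a w = P.β * ∑ s', P.p y' s a s' * (v s' - w s') := by
    simp only [hy, mul_sub, sum_sub_distrib]
    ring
  rw [hdiff, abs_mul, abs_of_nonneg P.β_nonneg]
  exact mul_le_mul_of_nonneg_left
    (abs_sum_mul_le_of_sum_eq_one (P.p_nonneg y' s a) (P.p_sum y' s a) h) P.β_nonneg

lemma abs_H_sub_H_le (P : SEP S Y M A) (v w : S → Belief M → ℝ) (C : ℝ)
    (h : ∀ s b, |v s b - w s b| ≤ C) : ∀ s b, |P.H v s b - P.H w s b| ≤ P.β * C := by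
  intro s b
  refine abs_inf'_sub_inf'_le _ fun a _ => ?_
  rw [← sum_sub_distrib]
  simp_rw [← mul_sub]
  exact abs_sum_mul_le_of_sum_eq_one (P.sig_nonneg b) (P.sum_sig_eq_one b)
    fun y' => P.abs_hy_sub_hy_le y' s a fun s' => h s' (P.lam y' b)

end SEP

namespace SEP.Bdd

variable {S M : Type} [Fintype M]

lemma const [Fintype S] (w : S → ℝ) : Bdd fun s (_ : Belief M) => w s :=
  ⟨∑ t, |w t|, fun s _ => single_le_sum (f := fun t => |w t|) (fun _ _ => abs_nonneg _)
    (mem_univ s)⟩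

lemma exists_abs_sub_le {v w : S → Belief M → ℝ} (hv : Bdd v) (hw : Bdd w) :
    ∃ C, ∀ s b, |v s b - w s b| ≤ C := by
  obtain ⟨Cv, hCv⟩ := hv
  obtain ⟨Cw, hCw⟩ := hw
  exact ⟨Cv + Cw, fun s b => (abs_sub _ _).trans (add_le_add (hCv s b) (hCw s b))⟩

lemma of_abs_sub_le {v w : S → Belief M → ℝ} (hw : Bdd w) {C : ℝ}
    (h : ∀ s b, |v s b - w s b| ≤ C) : Bdd v := by
  obtain ⟨Cw, hCw⟩ := hw
  refine ⟨C + Cw, fun s b => ?_⟩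
  calc |v s b| = |(v s b - w s b) + w s b| := by rw [sub_add_cancel]
    _ ≤ C + Cw := (abs_add_le _ _).trans (add_le_add (h s b) (hCw s b))

end SEP.Bdd

theorem extended_porteus_value_general {S Y M A : Type} [Fintype S] [Fintype Y] [Fintype M] [Fintype A]
    (P : SEP S Y M A)
    (Vt : Set (S → ℝ)) (hVne : Vt.Nonempty) (hVclosed : IsClosed Vt)
    -- P(b): structured value preservation
    (hPb : ∀ v : S → Belief M → ℝ, SEP.Bdd v →
      (∀ b, (fun s => v s b) ∈ Vt) → ∀ b, (fun s => P.H v s b) ∈ Vt)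
    -- the unique bounded fixed point of H
    (vstar : S → Belief M → ℝ) (hbdd : SEP.Bdd vstar)
    (hfix : ∀ s b, vstar s b = P.H vstar s b) :
    ∀ b, (fun s => vstar s b) ∈ Vt := by
  obtain ⟨w₀, hw₀⟩ := hVne
  have hvstar : Function.IsFixedPt P.H vstar := (funext₂ hfix).symm
  obtain ⟨C, hC⟩ := (SEP.Bdd.const (M := M) w₀).exists_abs_sub_le hbdd
  have hclose := abs_iterate_sub_le_of_isFixedPt P.abs_H_sub_H_le hvstar hC
  have hmem : ∀ n b, (fun s => P.H^[n] (fun s _ => w₀ s) s b) ∈ Vt := by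
    intro n
    induction n with
    | zero => exact fun _ => hw₀
    | succ n ih =>
      rw [Function.iterate_succ_apply']
      exact hPb _ (hbdd.of_abs_sub_le (hclose n)) ih
  intro b
  exact hVclosed.mem_of_tendsto
    (tendsto_iterate_of_isFixedPt P.β_nonneg P.β_lt_one P.abs_H_sub_H_le hvstar hC b)
    (Eventually.of_forall fun n => hmem n b)

/-- **Value-function version of the extended Porteus theorem.** Under P(a) and
P(b), the unique bounded fixed point `vstar` of `H` satisfies
`vstar (·, b) ∈ Vt` for every belief `b`. -/
theorem extended_porteus_value {S Y M A : Type} [Fintype S] [Fintype Y] [Fintype M] [Fintype A]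
    [Nonempty S] [Nonempty Y] [Nonempty M] [Nonempty A]
    (P : SEP S Y M A)
    (Vt : Set (S → ℝ)) (hVne : Vt.Nonempty) (hVclosed : IsClosed Vt)
    -- P(b): structured value preservation
    (hPb : ∀ v : S → Belief M → ℝ, SEP.Bdd v →
      (∀ b, (fun s => v s b) ∈ Vt) → ∀ b, (fun s => P.H v s b) ∈ Vt)
    -- the unique bounded fixed point of H
    (vstar : S → Belief M → ℝ) (hbdd : SEP.Bdd vstar)
    (hfix : ∀ s b, vstar s b = P.H vstar s b) :
    ∀ b, (fun s => vstar s b) ∈ Vt :=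
  extended_porteus_value_general P Vt hVne hVclosed hPb vstar hbdd hfix
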